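/- Let f : ℝⁿ → ℝ be convex and differentiable, let θ* ∈ ℝⁿ be a global minimizer of f, and consider one step of the stochastic MTSL iteration at time t satisfying: unbiasedness E[g̃(t) | ℱ_t] = ∇f(θ(t)) almost surely; second-moment bound E[‖g̃(t)‖²] ≤ G²; and the alignment condition that almost surely ∂ᵢf(θ(t)) · (θᵢ(t) − θ*ᵢ) ≥ 0 for every coordinate i. Assume f(θ(t)) and ‖θ(t) − θ*‖² are integrable. Then E[ ‖θ(t+1) − θ*‖² ] ≤ E[ ‖θ(t) − θ*‖² ] − 2 η_min(t) E[ f(θ(t)) − f(θ*) ] + η_max(t)² G². -/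

import Mathlib

/-!
Expanding the square, `‖θ - η ⊙ g̃ - θ*‖² = ‖θ - θ*‖² - 2 ∑ ηᵢ (θᵢ - θ*ᵢ) g̃ᵢ + ∑ ηᵢ² g̃ᵢ²`.
Since `θ` is `ℱ_t`-measurable, the pull-out property and unbiasedness replace `g̃ᵢ` by `∂ᵢf(θ)`
in the expected cross term. By alignment every summand `ηᵢ E[(θᵢ - θ*ᵢ) ∂ᵢf(θ)]` is nonnegative,
so the cross term is at least `η_min E⟨∇f(θ), θ - θ*⟩ ≥ η_min E[f(θ) - f(θ*)]` by the first-order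
convexity inequality, while the last term is at most `η_max² E‖g̃‖² ≤ η_max² G²`.
-/

open MeasureTheory Finset

/-- The `i`-th partial derivative of `f : ℝⁿ → ℝ` at `x`. -/
noncomputable def pderiv' {n : ℕ} (f : (Fin n → ℝ) → ℝ) (i : Fin n) (x : Fin n → ℝ) : ℝ :=
  fderiv ℝ f x (Pi.single i 1)

theorem ConvexOn.add_le_of_hasFDerivAt {E : Type*} [NormedAddCommGroup E] [NormedSpace ℝ E]
    {s : Set E} {f : E → ℝ} {f' : E →L[ℝ] ℝ} {x y : E} (hf : ConvexOn ℝ s f) (hx : x ∈ s)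
    (hy : y ∈ s) (hf' : HasFDerivAt f f' x) : f x + f' (y - x) ≤ f y := by
  have hline : HasDerivAt (f ∘ AffineMap.lineMap (k := ℝ) x y) (f' (y - x)) 0 :=
    hf'.comp_hasDerivAt_of_eq 0 AffineMap.hasDerivAt_lineMap (by simp)
  have := (hf.comp_affineMap (AffineMap.lineMap x y)).le_slope_of_hasDerivAt
    (by simpa) (by simpa) one_pos hline
  simp only [slope_def_field, Function.comp_apply, AffineMap.lineMap_apply_zero,
    AffineMap.lineMap_apply_one, sub_zero, div_one] at this
  linarith

theorem fderiv_apply_eq_sum_mul_pderiv' {n : ℕ} (f : (Fin n → ℝ) → ℝ) (x v : Fin n → ℝ) :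
    fderiv ℝ f x v = ∑ i, v i * pderiv' f i x := by
  conv_lhs => rw [← univ_sum_single v]
  refine (map_sum _ _ _).trans (sum_congr rfl fun i _ => ?_)
  rw [pderiv', ← smul_eq_mul, ← map_smul, ← Pi.single_smul', smul_eq_mul, mul_one]

theorem ConvexOn.sub_le_sum_mul_pderiv' {n : ℕ} {f : (Fin n → ℝ) → ℝ}
    (hf : ConvexOn ℝ Set.univ f) {x : Fin n → ℝ} (hx : DifferentiableAt ℝ f x) (y : Fin n → ℝ) :
    f x - f y ≤ ∑ i, (x i - y i) * pderiv' f i x := by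
  have := hf.add_le_of_hasFDerivAt (Set.mem_univ x) (Set.mem_univ y) hx.hasFDerivAt
  rw [← neg_sub, map_neg, fderiv_apply_eq_sum_mul_pderiv'] at this
  simp only [Pi.sub_apply] at this
  linarith

theorem Finset.inf'_mul_sum_le_sum_mul {ι R : Type*} [Semiring R] [LinearOrder R] [IsOrderedRing R]
    {s : Finset ι} (hs : s.Nonempty) (w J : ι → R) (hJ : ∀ i ∈ s, 0 ≤ J i) :
    s.inf' hs w * ∑ i ∈ s, J i ≤ ∑ i ∈ s, w i * J i := by
  rw [mul_sum]
  exact sum_le_sum fun i hi => mul_le_mul_of_nonneg_right (inf'_le w hi) (hJ i hi)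

theorem Finset.sum_sq_mul_le_sup'_sq_mul_sum {ι R : Type*} [Semiring R] [LinearOrder R]
    [IsOrderedRing R] {s : Finset ι} (hs : s.Nonempty) {w : ι → R} (hw : ∀ i ∈ s, 0 ≤ w i)
    (J : ι → R) (hJ : ∀ i ∈ s, 0 ≤ J i) :
    ∑ i ∈ s, w i ^ 2 * J i ≤ s.sup' hs w ^ 2 * ∑ i ∈ s, J i := by
  rw [mul_sum]
  exact sum_le_sum fun i hi =>
    mul_le_mul_of_nonneg_right (pow_le_pow_left₀ (hw i hi) (le_sup' w hi) 2) (hJ i hi)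

section Expectation

variable {Ω : Type*} {m0 : MeasurableSpace Ω} {μ : Measure Ω}

theorem memLp_two_apply_of_integrable_sum_sq {ι : Type*} [Fintype ι] {a : Ω → ι → ℝ}
    (ha : AEStronglyMeasurable a μ) (hint : Integrable (fun ω => ∑ i, a ω i ^ 2) μ) (i : ι) :
    MemLp (a · i) 2 μ := by
  have hai : AEStronglyMeasurable (a · i) μ := (continuous_apply i).comp_aestronglyMeasurable ha
  refine (memLp_two_iff_integrable_sq hai).2 (hint.mono (hai.pow 2) (ae_of_all _ fun ω => ?_))
  simp only [Real.norm_eq_abs, abs_pow, sq_abs]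
  rw [abs_of_nonneg (sum_nonneg fun j _ => sq_nonneg _)]
  exact single_le_sum (f := fun j => a ω j ^ 2) (fun j _ => sq_nonneg _) (mem_univ i)

theorem integral_sum_sq_sub_mul {ι : Type*} [Fintype ι] {a b : Ω → ι → ℝ}
    (ha : ∀ i, MemLp (a · i) 2 μ) (hb : ∀ i, MemLp (b · i) 2 μ) (η : ι → ℝ) :
    ∫ ω, ∑ i, (a ω i - η i * b ω i) ^ 2 ∂μ =
      ∫ ω, ∑ i, a ω i ^ 2 ∂μ - 2 * ∑ i, η i * ∫ ω, a ω i * b ω i ∂μ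
        + ∑ i, η i ^ 2 * ∫ ω, b ω i ^ 2 ∂μ := by
  have hstep i : Integrable (fun ω => (a ω i - η i * b ω i) ^ 2) μ :=
    ((ha i).sub ((hb i).const_mul (η i))).integrable_sq
  rw [integral_finsetSum _ fun i _ => hstep i,
    integral_finsetSum _ fun i _ => (ha i).integrable_sq, mul_sum, ← sum_sub_distrib,
    ← sum_add_distrib]
  refine sum_congr rfl fun i _ => ?_
  have ha2 : Integrable (fun ω => a ω i ^ 2) μ := (ha i).integrable_sq
  have hab : Integrable (fun ω => 2 * η i * (a ω i * b ω i)) μ :=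
    ((ha i).integrable_mul (hb i)).const_mul _
  have hb2 : Integrable (fun ω => η i ^ 2 * b ω i ^ 2) μ := (hb i).integrable_sq.const_mul _
  have hexpand ω : (a ω i - η i * b ω i) ^ 2
      = a ω i ^ 2 - 2 * η i * (a ω i * b ω i) + η i ^ 2 * b ω i ^ 2 := by ring
  simp_rw [hexpand]
  rw [integral_add (f := fun ω => a ω i ^ 2 - 2 * η i * (a ω i * b ω i)) (ha2.sub hab) hb2,
    integral_sub ha2 hab, integral_const_mul, integral_const_mul]
  ring

theorem condExp_mul_apply_ae_eq_of_condExp_ae_eq {ι : Type*} [Fintype ι] {F : MeasurableSpace Ω}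
    {ξ : Ω → ℝ} {g h : Ω → ι → ℝ} (hξ : StronglyMeasurable[F] ξ) (hg : Integrable g μ)
    (hgh : μ[g | F] =ᵐ[μ] h) (i : ι) (hξg : Integrable (fun ω => ξ ω * g ω i) μ) :
    μ[fun ω => ξ ω * g ω i | F] =ᵐ[μ] fun ω => ξ ω * h ω i := by
  filter_upwards [condExp_mul_of_stronglyMeasurable_left hξ hξg (hg.eval i),
    (ContinuousLinearMap.proj i).comp_condExp_comm (m := F) hg, hgh] with ω hpull hproj hω
  refine hpull.trans ?_
  rw [Pi.mul_apply, ← hω]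
  exact congrArg (ξ ω * ·) hproj.symm

theorem ConvexOn.integral_sub_le_sum_integral_mul_pderiv' [IsFiniteMeasure μ] {n : ℕ}
    {f : (Fin n → ℝ) → ℝ} (hf : ConvexOn ℝ Set.univ f) (hdiff : Differentiable ℝ f)
    {X : Ω → Fin n → ℝ} (y : Fin n → ℝ) (hfX : Integrable (fun ω => f (X ω)) μ)
    (hX : ∀ i, Integrable (fun ω => (X ω i - y i) * pderiv' f i (X ω)) μ) :
    ∫ ω, (f (X ω) - f y) ∂μ ≤ ∑ i, ∫ ω, (X ω i - y i) * pderiv' f i (X ω) ∂μ := by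
  rw [← integral_finsetSum _ fun i _ => hX i]
  exact integral_mono (hfX.sub (integrable_const _)) (integrable_finsetSum _ fun i _ => hX i)
    fun ω => hf.sub_le_sum_mul_pderiv' (hdiff _) y

end Expectation

theorem mtsl_sgd_convex_one_step_general {n : ℕ} [NeZero n] {Ω : Type*} {m0 : MeasurableSpace Ω}
    (μ : Measure Ω) [IsProbabilityMeasure μ]
    (F : MeasurableSpace Ω) (hF : F ≤ m0)
    (f : (Fin n → ℝ) → ℝ)
    (hconv : ConvexOn ℝ Set.univ f) (hdiff : Differentiable ℝ f)
    (θs : Fin n → ℝ)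
    (η : Fin n → ℝ) (hη : ∀ i, 0 < η i)
    (G : ℝ)
    (θ gt : Ω → Fin n → ℝ)
    (hθmeas : Measurable[F] θ)
    (hgt2 : MemLp gt 2 μ)
    (hunbiased : μ[gt | F] =ᵐ[μ] fun ω => fun i => pderiv' f i (θ ω))
    (hG : ∫ ω, ∑ i, (gt ω i) ^ 2 ∂μ ≤ G ^ 2)
    (halign : ∀ᵐ ω ∂μ, ∀ i, 0 ≤ pderiv' f i (θ ω) * (θ ω i - θs i))
    (hfint : Integrable (fun ω => f (θ ω)) μ)
    (hθint : Integrable (fun ω => ∑ i, (θ ω i - θs i) ^ 2) μ) :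
    ∫ ω, ∑ i, ((θ ω i - η i * gt ω i) - θs i) ^ 2 ∂μ ≤
      (∫ ω, ∑ i, (θ ω i - θs i) ^ 2 ∂μ)
        - 2 * (Finset.univ.inf' Finset.univ_nonempty η) * ∫ ω, (f (θ ω) - f θs) ∂μ
        + (Finset.univ.sup' Finset.univ_nonempty η) ^ 2 * G ^ 2 := by
  have hθF : Measurable[F] fun ω => θ ω - θs := hθmeas.sub_const θs
  have hδ : ∀ i, MemLp (fun ω => θ ω i - θs i) 2 μ :=
    memLp_two_apply_of_integrable_sum_sq (hθF.mono hF le_rfl).aestronglyMeasurable hθint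
  have hg : ∀ i, MemLp (gt · i) 2 μ := hgt2.eval
  have hce : ∀ i, μ[fun ω => (θ ω i - θs i) * gt ω i | F]
      =ᵐ[μ] fun ω => (θ ω i - θs i) * pderiv' f i (θ ω) := fun i =>
    condExp_mul_apply_ae_eq_of_condExp_ae_eq ((measurable_pi_apply i).comp hθF).stronglyMeasurable
      (hgt2.integrable one_le_two) hunbiased i ((hδ i).integrable_mul (hg i))
  have hJ : ∀ i, ∫ ω, (θ ω i - θs i) * gt ω i ∂μ
      = ∫ ω, (θ ω i - θs i) * pderiv' f i (θ ω) ∂μ := fun i =>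
    (integral_condExp hF).symm.trans (integral_congr_ae (hce i))
  have hgap := hconv.integral_sub_le_sum_integral_mul_pderiv' hdiff θs hfint
    fun i => integrable_condExp.congr (hce i)
  have hcross : univ.inf' univ_nonempty η * ∫ ω, (f (θ ω) - f θs) ∂μ
      ≤ ∑ i, η i * ∫ ω, (θ ω i - θs i) * gt ω i ∂μ := by
    simp_rw [hJ]
    refine (mul_le_mul_of_nonneg_left hgap ((le_inf'_iff _ _).2 fun i _ => (hη i).le)).trans ?_
    refine inf'_mul_sum_le_sum_mul univ_nonempty η _ fun i _ => integral_nonneg_of_ae ?_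
    filter_upwards [halign] with ω hω
    simpa [mul_comm] using hω i
  have hquad : ∑ i, η i ^ 2 * ∫ ω, gt ω i ^ 2 ∂μ ≤ univ.sup' univ_nonempty η ^ 2 * G ^ 2 := by
    refine (sum_sq_mul_le_sup'_sq_mul_sum univ_nonempty (fun i _ => (hη i).le)
      (fun i => ∫ ω, gt ω i ^ 2 ∂μ) fun i _ => integral_nonneg fun ω => sq_nonneg _).trans ?_
    rw [← integral_finsetSum _ fun i _ => (hg i).integrable_sq]
    gcongr
  calc ∫ ω, ∑ i, ((θ ω i - η i * gt ω i) - θs i) ^ 2 ∂μ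
      = ∫ ω, ∑ i, ((θ ω i - θs i) - η i * gt ω i) ^ 2 ∂μ := by simp_rw [sub_right_comm]
    _ = _ := integral_sum_sq_sub_mul hδ hg η
    _ ≤ _ := by linarith

/-- One step of the stochastic MTSL iteration for a convex differentiable `f` with global
minimizer `θ*`, unbiased gradient estimate, second-moment bound `E‖g̃(t)‖² ≤ G²`, and the
coordinatewise alignment condition `∂ᵢf(θ(t))·(θᵢ(t) − θ*ᵢ) ≥ 0` a.s.:
`E‖θ(t+1) − θ*‖² ≤ E‖θ(t) − θ*‖² − 2 η_min(t) E[f(θ(t)) − f(θ*)] + η_max(t)² G²`. -/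
theorem mtsl_sgd_convex_one_step {n : ℕ} [NeZero n] {Ω : Type*} {m0 : MeasurableSpace Ω}
    (μ : Measure Ω) [IsProbabilityMeasure μ]
    (F : MeasurableSpace Ω) (hF : F ≤ m0)
    (f : (Fin n → ℝ) → ℝ)
    (hconv : ConvexOn ℝ Set.univ f) (hdiff : Differentiable ℝ f)
    (θs : Fin n → ℝ) (hmin : ∀ x, f θs ≤ f x)
    (η : Fin n → ℝ) (hη : ∀ i, 0 < η i)
    (G : ℝ)
    (θ gt : Ω → Fin n → ℝ)
    (hθmeas : Measurable[F] θ)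
    (hgt2 : MemLp gt 2 μ)
    (hunbiased : μ[gt | F] =ᵐ[μ] fun ω => fun i => pderiv' f i (θ ω))
    (hG : ∫ ω, ∑ i, (gt ω i) ^ 2 ∂μ ≤ G ^ 2)
    (halign : ∀ᵐ ω ∂μ, ∀ i, 0 ≤ pderiv' f i (θ ω) * (θ ω i - θs i))
    (hfint : Integrable (fun ω => f (θ ω)) μ)
    (hθint : Integrable (fun ω => ∑ i, (θ ω i - θs i) ^ 2) μ) :
    ∫ ω, ∑ i, ((θ ω i - η i * gt ω i) - θs i) ^ 2 ∂μ ≤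
      (∫ ω, ∑ i, (θ ω i - θs i) ^ 2 ∂μ)
        - 2 * (Finset.univ.inf' Finset.univ_nonempty η) * ∫ ω, (f (θ ω) - f θs) ∂μ
        + (Finset.univ.sup' Finset.univ_nonempty η) ^ 2 * G ^ 2 :=
  mtsl_sgd_convex_one_step_general μ F hF f hconv hdiff θs η hη G θ gt hθmeas hgt2 hunbiased hG
    halign hfint hθint
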